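/- Let v : 2^M → ℝ be a valuation with v(S) = max over T ⊆ S with |T| ≤ 2 of Σ_{j∈T} w_j, where w_j ≥ 0 for each item j (a pair-demand valuation). Let M = {a, b, c, d} be four items with w_a ≤ w_b ≤ w_c ≤ w_d. Then for every 2-element subset S of M with S ∉ {{a,b}, {a,c}}, it holds that v(S) ≥ μ(M), where μ(M) = max over partitions (A,B) of M of min(v(A), v(B)). -/
import Mathlib


open Finset

/-- Pair-demand valuation: the best sum of at most two item weights in the bundle. -/
noncomputable def pd {α : Type*} [DecidableEq α] (w : α → ℝ) (S : Finset α) : ℝ :=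
  (S.powerset.filter fun T => T.card ≤ 2).sup' ⟨∅, by simp⟩ fun T => ∑ j ∈ T, w j

/-- Two-part maximin share: max over partitions (A, S \ A) of S of the min value. -/
noncomputable def mu {α : Type*} [DecidableEq α] (v : Finset α → ℝ) (S : Finset α) : ℝ :=
  S.powerset.sup' ⟨∅, Finset.empty_mem_powerset S⟩ fun A => min (v A) (v (S \ A))

lemma enum4 {α : Type*} [DecidableEq α] {a b c d : α} {A : Finset α}
    (h : A ⊆ ({a,b,c,d} : Finset α)) :
    A = ∅ ∨ A = {a} ∨ A = {b} ∨ A = {c} ∨ A = {d} ∨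
    A = {a,b} ∨ A = {a,c} ∨ A = {a,d} ∨ A = {b,c} ∨ A = {b,d} ∨ A = {c,d} ∨
    A = {a,b,c} ∨ A = {a,b,d} ∨ A = {a,c,d} ∨ A = {b,c,d} ∨ A = {a,b,c,d} := by
  have key : ({a,b,c,d} : Finset α).filter (· ∈ A) = A := by
    rw [Finset.filter_mem_eq_inter]
    exact Finset.inter_eq_right.mpr h
  by_cases ha : a ∈ A <;> by_cases hb : b ∈ A <;> by_cases hc : c ∈ A <;> by_cases hd : d ∈ A <;>
    · rw [← key]
      simp [Finset.filter_insert, Finset.filter_singleton, ha, hb, hc, hd]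

lemma enum3 {α : Type*} [DecidableEq α] {a b c : α} {A : Finset α}
    (h : A ⊆ ({a,b,c} : Finset α)) :
    A = ∅ ∨ A = {a} ∨ A = {b} ∨ A = {c} ∨
    A = {a,b} ∨ A = {a,c} ∨ A = {b,c} ∨ A = {a,b,c} := by
  have key : ({a,b,c} : Finset α).filter (· ∈ A) = A := by
    rw [Finset.filter_mem_eq_inter]
    exact Finset.inter_eq_right.mpr h
  by_cases ha : a ∈ A <;> by_cases hb : b ∈ A <;> by_cases hc : c ∈ A <;>
    · rw [← key]
      simp [Finset.filter_insert, Finset.filter_singleton, ha, hb, hc]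

lemma pd_le {α : Type*} [DecidableEq α] {w : α → ℝ} {S : Finset α} {x : ℝ}
    (h : ∀ T ⊆ S, T.card ≤ 2 → ∑ j ∈ T, w j ≤ x) : pd w S ≤ x := by
  apply Finset.sup'_le
  intro T hT
  simp only [Finset.mem_filter, Finset.mem_powerset] at hT
  exact h T hT.1 hT.2

lemma pd_le_sum {α : Type*} [DecidableEq α] {w : α → ℝ} (hw : ∀ g, 0 ≤ w g) (S : Finset α) :
    pd w S ≤ ∑ j ∈ S, w j := by
  apply pd_le
  intro T hT _
  exact Finset.sum_le_sum_of_subset_of_nonneg hT (fun i _ _ => hw i)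

lemma pd_pair_ge {α : Type*} [DecidableEq α] {w : α → ℝ} {x y : α} (hxy : x ≠ y) :
    w x + w y ≤ pd w ({x, y} : Finset α) := by
  have hmem : ({x, y} : Finset α) ∈ (({x, y} : Finset α).powerset.filter fun T => T.card ≤ 2) := by
    simp [Finset.card_pair hxy]
  calc w x + w y = ∑ j ∈ ({x, y} : Finset α), w j := (Finset.sum_pair hxy).symm
    _ ≤ pd w ({x, y} : Finset α) := Finset.le_sup' (fun T => ∑ j ∈ T, w j) hmem

lemma pd_triple_le {α : Type*} [DecidableEq α] {w : α → ℝ} (hw : ∀ g, 0 ≤ w g)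
    {x y z : α} (hxy : x ≠ y) (hxz : x ≠ z) (hyz : y ≠ z)
    (h1 : w x ≤ w y) (h2 : w y ≤ w z) :
    pd w ({x, y, z} : Finset α) ≤ w y + w z := by
  apply pd_le
  intro T hT hcard
  rcases enum3 hT with rfl | rfl | rfl | rfl | rfl | rfl | rfl | rfl
  · rw [Finset.sum_empty]; linarith [hw y, hw z]
  · rw [Finset.sum_singleton]; linarith [hw z]
  · rw [Finset.sum_singleton]; linarith [hw z]
  · rw [Finset.sum_singleton]; linarith [hw y]
  · rw [Finset.sum_pair hxy]; linarith
  · rw [Finset.sum_pair hxz]; linarith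
  · exact le_of_eq (Finset.sum_pair hyz)
  · exfalso
    have : ({x, y, z} : Finset α).card = 3 := by
      rw [Finset.card_insert_of_notMem (by simp [hxy, hxz]),
        Finset.card_insert_of_notMem (by simp [hyz]), Finset.card_singleton]
    omega

theorem stmt3 {α : Type*} [DecidableEq α] (a b c d : α)
    (hab : a ≠ b) (hac : a ≠ c) (had : a ≠ d) (hbc : b ≠ c) (hbd : b ≠ d) (hcd : c ≠ d)
    (w : α → ℝ) (hw : ∀ g, 0 ≤ w g)
    (h1 : w a ≤ w b) (h2 : w b ≤ w c) (h3 : w c ≤ w d) :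
    ∀ S ⊆ ({a, b, c, d} : Finset α), S.card = 2 →
      S ≠ {a, b} → S ≠ {a, c} →
      pd w S ≥ mu (pd w) ({a, b, c, d} : Finset α) := by
  intro S hS hScard hS1 hS2
  have hba := hab.symm; have hca := hac.symm; have hda := had.symm
  have hcb := hbc.symm; have hdb := hbd.symm; have hdc := hcd.symm
  set M : Finset α := {a, b, c, d} with hM
  -- complement computations
  have sd_d : M \ {d} = {a, b, c} := by
    ext x
    simp only [hM, Finset.mem_sdiff, Finset.mem_insert, Finset.mem_singleton]
    constructor
    · tauto
    · rintro (rfl | rfl | rfl) <;> simp_all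
  have sd_ad : M \ {a, d} = {b, c} := by
    ext x
    simp only [hM, Finset.mem_sdiff, Finset.mem_insert, Finset.mem_singleton]
    constructor
    · tauto
    · rintro (rfl | rfl) <;> simp_all
  have sd_bc : M \ {b, c} = {a, d} := by
    ext x
    simp only [hM, Finset.mem_sdiff, Finset.mem_insert, Finset.mem_singleton]
    constructor
    · tauto
    · rintro (rfl | rfl) <;> simp_all
  have sd_bd : M \ {b, d} = {a, c} := by
    ext x
    simp only [hM, Finset.mem_sdiff, Finset.mem_insert, Finset.mem_singleton]
    constructor
    · tauto
    · rintro (rfl | rfl) <;> simp_all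
  have sd_cd : M \ {c, d} = {a, b} := by
    ext x
    simp only [hM, Finset.mem_sdiff, Finset.mem_insert, Finset.mem_singleton]
    constructor
    · tauto
    · rintro (rfl | rfl) <;> simp_all
  have sd_abc : M \ {a, b, c} = {d} := by
    ext x
    simp only [hM, Finset.mem_sdiff, Finset.mem_insert, Finset.mem_singleton]
    constructor
    · tauto
    · rintro rfl; simp_all
  have sd_abd : M \ {a, b, d} = {c} := by
    ext x
    simp only [hM, Finset.mem_sdiff, Finset.mem_insert, Finset.mem_singleton]
    constructor
    · tauto
    · rintro rfl; simp_all
  have sd_acd : M \ {a, c, d} = {b} := by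
    ext x
    simp only [hM, Finset.mem_sdiff, Finset.mem_insert, Finset.mem_singleton]
    constructor
    · tauto
    · rintro rfl; simp_all
  have sd_bcd : M \ {b, c, d} = {a} := by
    ext x
    simp only [hM, Finset.mem_sdiff, Finset.mem_insert, Finset.mem_singleton]
    constructor
    · tauto
    · rintro rfl; simp_all
  -- basic pd bounds
  have pe : pd w (∅ : Finset α) ≤ 0 := le_of_le_of_eq (pd_le_sum hw ∅) (by simp)
  have p1 : ∀ x : α, pd w {x} ≤ w x := fun x =>
    le_of_le_of_eq (pd_le_sum hw {x}) (by simp)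
  have p2 : ∀ x y : α, x ≠ y → pd w {x, y} ≤ w x + w y := fun x y hxy =>
    le_of_le_of_eq (pd_le_sum hw {x, y}) (Finset.sum_pair hxy)
  have pabc : pd w {a, b, c} ≤ w b + w c := pd_triple_le hw hab hac hbc h1 h2
  have hwa := hw a; have hwb := hw b; have hwc := hw c; have hwd := hw d
  -- mu is at most min (w a + w d) (w b + w c)
  have hmu : mu (pd w) M ≤ min (w a + w d) (w b + w c) := by
    apply Finset.sup'_le
    intro A hA
    rw [Finset.mem_powerset] at hA
    rcases enum4 hA with rfl | rfl | rfl | rfl | rfl | rfl | rfl | rfl | rfl | rfl | rfl |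
      rfl | rfl | rfl | rfl | rfl
    · exact le_trans (min_le_left _ _) (le_min (by linarith) (by linarith))
    · exact le_trans (min_le_left _ _) (le_trans (p1 a) (le_min (by linarith) (by linarith)))
    · exact le_trans (min_le_left _ _) (le_trans (p1 b) (le_min (by linarith) (by linarith)))
    · exact le_trans (min_le_left _ _) (le_trans (p1 c) (le_min (by linarith) (by linarith)))
    · refine le_min ?_ ?_
      · exact le_trans (min_le_left _ _) (le_trans (p1 d) (by linarith))
      · rw [sd_d]; exact le_trans (min_le_right _ _) pabc
    · exact le_trans (min_le_left _ _) (le_trans (p2 a b hab) (le_min (by linarith) (by linarith)))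
    · exact le_trans (min_le_left _ _) (le_trans (p2 a c hac) (le_min (by linarith) (by linarith)))
    · refine le_min ?_ ?_
      · exact le_trans (min_le_left _ _) (p2 a d had)
      · rw [sd_ad]; exact le_trans (min_le_right _ _) (p2 b c hbc)
    · refine le_min ?_ ?_
      · rw [sd_bc]; exact le_trans (min_le_right _ _) (p2 a d had)
      · exact le_trans (min_le_left _ _) (p2 b c hbc)
    · rw [sd_bd]
      exact le_trans (min_le_right _ _) (le_trans (p2 a c hac) (le_min (by linarith) (by linarith)))
    · rw [sd_cd]
      exact le_trans (min_le_right _ _) (le_trans (p2 a b hab) (le_min (by linarith) (by linarith)))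
    · refine le_min ?_ ?_
      · rw [sd_abc]; exact le_trans (min_le_right _ _) (le_trans (p1 d) (by linarith))
      · exact le_trans (min_le_left _ _) pabc
    · rw [sd_abd]
      exact le_trans (min_le_right _ _) (le_trans (p1 c) (le_min (by linarith) (by linarith)))
    · rw [sd_acd]
      exact le_trans (min_le_right _ _) (le_trans (p1 b) (le_min (by linarith) (by linarith)))
    · rw [sd_bcd]
      exact le_trans (min_le_right _ _) (le_trans (p1 a) (le_min (by linarith) (by linarith)))
    · rw [Finset.sdiff_self]
      exact le_trans (min_le_right _ _) (le_trans pe (le_min (by linarith) (by linarith)))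
  -- now enumerate S
  have card3 : ∀ x y z : α, x ≠ y → x ≠ z → y ≠ z → ({x, y, z} : Finset α).card = 3 := by
    intro x y z hxy hxz hyz
    rw [Finset.card_insert_of_notMem (by simp [hxy, hxz]),
      Finset.card_insert_of_notMem (by simp [hyz]), Finset.card_singleton]
  have hmin : min (w a + w d) (w b + w c) ≤ pd w S := by
    rcases enum4 hS with rfl | rfl | rfl | rfl | rfl | rfl | rfl | rfl | rfl | rfl | rfl |
      rfl | rfl | rfl | rfl | rfl
    · simp at hScard
    · simp at hScard
    · simp at hScard
    · simp at hScard
    · simp at hScard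
    · exact absurd rfl hS1
    · exact absurd rfl hS2
    · exact le_trans (min_le_left _ _) (pd_pair_ge had)
    · exact le_trans (min_le_right _ _) (pd_pair_ge hbc)
    · refine le_trans (min_le_right _ _) (le_trans ?_ (pd_pair_ge hbd))
      linarith
    · refine le_trans (min_le_right _ _) (le_trans ?_ (pd_pair_ge hcd))
      linarith
    · rw [card3 a b c hab hac hbc] at hScard; omega
    · rw [card3 a b d hab had hbd] at hScard; omega
    · rw [card3 a c d hac had hcd] at hScard; omega
    · rw [card3 b c d hbc hbd hcd] at hScard; omega
    · exfalso
      have : ({a, b, c, d} : Finset α).card = 4 := by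
        rw [Finset.card_insert_of_notMem (by simp [hab, hac, had]),
          card3 b c d hbc hbd hcd]
      omega
  exact le_trans hmu hmin
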